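/- Let d ≥ 2 be an integer and γ̃ > 0. There exist a constant L ≥ 0 and a map 𝒮̃ : M_d(ℝ) → M_d(ℝ) such that: (i) 𝒮̃(G) = 𝒮(G) for every matrix G with Frobenius norm |G| ≥ γ̃; (ii) |𝒮̃(G)| ≤ 1 + 1/√d for every G ∈ M_d(ℝ); and (iii) 𝒮̃ is Lipschitz continuous on all of M_d(ℝ) with Lipschitz constant L. (Truncation of the Doi–Edwards orientation map, Lemma 4.3.) -/

import Mathlib

open MeasureTheory Metric

noncomputable section

/-- The surface measure on the unit sphere `𝕊^{d-1} ⊂ ℝ^d`. -/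
def sphereSurf (d : ℕ) : Measure (sphere (0 : EuclideanSpace ℝ (Fin d)) 1) :=
  (volume : Measure (EuclideanSpace ℝ (Fin d))).toSphere

/-- Euclidean norm of a vector in `ℝ^d`. -/
def euclNorm {d : ℕ} (v : Fin d → ℝ) : ℝ := Real.sqrt (∑ i, v i ^ 2)

/-- Frobenius norm of a real `d × d` matrix. -/
def frobNorm {d : ℕ} (G : Matrix (Fin d) (Fin d) ℝ) : ℝ :=
  Real.sqrt (∑ k, ∑ l, G k l ^ 2)

/-- The Doi–Edwards orientation tensor `𝒮(G)`. -/
def DES (d : ℕ) (G : Matrix (Fin d) (Fin d) ℝ) : Matrix (Fin d) (Fin d) ℝ :=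
  fun k l =>
    (∫ u : sphere (0 : EuclideanSpace ℝ (Fin d)) 1,
        G.mulVec u k * G.mulVec u l / euclNorm (G.mulVec u) ∂ sphereSurf d) /
      (∫ u : sphere (0 : EuclideanSpace ℝ (Fin d)) 1,
        euclNorm (G.mulVec u) ∂ sphereSurf d)
    - (if k = l then 1 / d else 0)

/-!
The numerator `A(G) = ∫ (Gu)(Gu)ᵀ / |Gu| dσ` and the denominator `N(G) = ∫ |Gu| dσ` of `𝒮(G)` are
Lipschitz in `G`, because `v ↦ v vᵀ / |v|` is entrywise `3`-Lipschitz; Cauchy–Schwarz under the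
integral gives `|A(G)| ≤ N(G)`. Since `N` is continuous, positively homogeneous and positive away
from `0`, compactness of the unit sphere of `M_d(ℝ)` yields `N(G) ≥ c |G|` with `c > 0`. The map
`G ↦ A(G) / max (N(G), c γ̃)` therefore coincides with `𝒮` on `{|G| ≥ γ̃}`, has norm at most `1`,
and is Lipschitz with constant `O(1 / (c γ̃))`.
-/

theorem exists_pos_mul_norm_le_of_continuous_of_homogeneous {E : Type*} [NormedAddCommGroup E]
    [NormedSpace ℝ E] [FiniteDimensional ℝ E] {f : E → ℝ} (hf : Continuous f)
    (hsmul : ∀ t : ℝ, 0 ≤ t → ∀ x, f (t • x) = t * f x) (hpos : ∀ x, x ≠ 0 → 0 < f x) :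
    ∃ c > 0, ∀ x, c * ‖x‖ ≤ f x := by
  have hzero : f 0 = 0 := by simpa using hsmul 0 le_rfl 0
  rcases subsingleton_or_nontrivial E with hE | hE
  · exact ⟨1, one_pos, fun x => by simp [Subsingleton.elim x 0, hzero]⟩
  obtain ⟨x₀, hx₀, hmin⟩ := (isCompact_sphere (0 : E) 1).exists_isMinOn
    (NormedSpace.sphere_nonempty.2 zero_le_one) hf.continuousOn
  refine ⟨f x₀, hpos x₀ (ne_zero_of_mem_unit_sphere ⟨x₀, hx₀⟩), fun x => ?_⟩
  rcases eq_or_ne x 0 with rfl | hx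
  · simp [hzero]
  have hunit : ‖x‖⁻¹ • x ∈ sphere (0 : E) 1 := by simp [norm_smul, hx]
  calc f x₀ * ‖x‖ ≤ f (‖x‖⁻¹ • x) * ‖x‖ := by gcongr; exact hmin hunit
    _ = f x := by
      rw [hsmul _ (by positivity), mul_comm, ← mul_assoc, mul_inv_cancel₀ (norm_ne_zero_iff.2 hx),
        one_mul]

theorem norm_inv_smul_sub_inv_smul_le {E : Type*} [SeminormedAddCommGroup E] [NormedSpace ℝ E]
    {x y : E} {a b β : ℝ} (hβ : 0 < β) (ha : β ≤ a) (hb : β ≤ b) (hy : ‖y‖ ≤ b) :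
    ‖a⁻¹ • x - b⁻¹ • y‖ ≤ (‖x - y‖ + |a - b|) / β := by
  have ha₀ : 0 < a := hβ.trans_le ha
  have hb₀ : 0 < b := hβ.trans_le hb
  have split : a⁻¹ • x - b⁻¹ • y = a⁻¹ • (x - y) + ((b - a) / (a * b)) • y := by
    rw [smul_sub, sub_add, ← sub_smul]
    congr 2
    field_simp
    ring
  calc ‖a⁻¹ • x - b⁻¹ • y‖ ≤ a⁻¹ * ‖x - y‖ + |b - a| / (a * b) * ‖y‖ := by
        rw [split]
        refine (norm_add_le _ _).trans_eq ?_
        rw [norm_smul, norm_smul, Real.norm_eq_abs, Real.norm_eq_abs, abs_inv, abs_of_pos ha₀,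
          abs_div, abs_of_pos (mul_pos ha₀ hb₀)]
    _ ≤ β⁻¹ * ‖x - y‖ + |a - b| / a := by
        gcongr
        rw [abs_sub_comm, div_mul_eq_mul_div, div_le_div_iff₀ (mul_pos ha₀ hb₀) ha₀]
        calc |a - b| * ‖y‖ * a ≤ |a - b| * b * a := by gcongr
          _ = |a - b| * (a * b) := by ring
    _ ≤ (‖x - y‖ + |a - b|) / β := by
        rw [add_div, inv_mul_eq_div]; gcongr

namespace DoiEdwards

section

attribute [local instance] Matrix.frobeniusNormedAddCommGroup Matrix.frobeniusNormedSpace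

open scoped Matrix

variable {d : ℕ}

lemma euclNorm_eq_norm (v : Fin d → ℝ) : euclNorm v = ‖WithLp.toLp 2 v‖ := by
  simp [euclNorm, EuclideanSpace.norm_eq]

lemma euclNorm_nonneg (v : Fin d → ℝ) : 0 ≤ euclNorm v := Real.sqrt_nonneg _

lemma abs_apply_le_euclNorm (v : Fin d → ℝ) (k : Fin d) : |v k| ≤ euclNorm v := by
  simpa [euclNorm_eq_norm] using PiLp.norm_apply_le (WithLp.toLp 2 v) k

lemma abs_euclNorm_sub_euclNorm_le (v w : Fin d → ℝ) :
    |euclNorm v - euclNorm w| ≤ euclNorm (v - w) := by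
  simpa [euclNorm_eq_norm] using abs_norm_sub_norm_le (WithLp.toLp 2 v) (WithLp.toLp 2 w)

lemma euclNorm_sub_comm (v w : Fin d → ℝ) : euclNorm (v - w) = euclNorm (w - v) := by
  simp only [euclNorm_eq_norm, WithLp.toLp_sub, norm_sub_rev]

lemma euclNorm_smul (t : ℝ) (v : Fin d → ℝ) : euclNorm (t • v) = |t| * euclNorm v := by
  simp [euclNorm_eq_norm, norm_smul]

lemma dotProduct_le_euclNorm_mul (v w : Fin d → ℝ) : v ⬝ᵥ w ≤ euclNorm v * euclNorm w :=
  Real.sum_mul_le_sqrt_mul_sqrt _ v w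

lemma frobNorm_eq_norm (M : Matrix (Fin d) (Fin d) ℝ) : frobNorm M = ‖M‖ := by
  simp [frobNorm, Matrix.frobenius_norm_def, Real.sqrt_eq_rpow]

lemma norm_sq_eq_sum (M : Matrix (Fin d) (Fin d) ℝ) : ‖M‖ ^ 2 = ∑ k, ∑ l, M k l ^ 2 := by
  rw [← frobNorm_eq_norm, frobNorm, Real.sq_sqrt (by positivity)]

lemma euclNorm_mulVec_le (M : Matrix (Fin d) (Fin d) ℝ) (v : Fin d → ℝ) :
    euclNorm (M *ᵥ v) ≤ ‖M‖ * euclNorm v := by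
  rw [← frobNorm_eq_norm, frobNorm, euclNorm, euclNorm, ← Real.sqrt_mul (by positivity),
    Finset.sum_mul]
  exact Real.sqrt_le_sqrt <| Finset.sum_le_sum fun k _ =>
    Finset.sum_mul_sq_le_sq_mul_sq Finset.univ (M k) v

lemma norm_le_mul_of_abs_apply_le {M : Matrix (Fin d) (Fin d) ℝ} {c : ℝ} (hc : 0 ≤ c)
    (h : ∀ k l, |M k l| ≤ c) : ‖M‖ ≤ d * c := by
  rw [← pow_le_pow_iff_left₀ (norm_nonneg M) (by positivity) two_ne_zero, norm_sq_eq_sum]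
  calc ∑ k, ∑ l, M k l ^ 2 ≤ ∑ _k : Fin d, ∑ _l : Fin d, c ^ 2 :=
        Finset.sum_le_sum fun k _ => Finset.sum_le_sum fun l _ =>
          sq_le_sq.2 ((h k l).trans (le_abs_self c))
    _ = (d * c) ^ 2 := by simp; ring

def outerDivNorm (v : Fin d → ℝ) : Matrix (Fin d) (Fin d) ℝ := fun k l => v k * v l / euclNorm v

lemma abs_outerDivNorm_le (v : Fin d → ℝ) (k l : Fin d) :
    |outerDivNorm v k l| ≤ euclNorm v := by
  rcases (euclNorm_nonneg v).eq_or_lt with h | h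
  · simp [outerDivNorm, ← h]
  · rw [outerDivNorm, abs_div, abs_mul, abs_of_pos h, div_le_iff₀ h]
    exact mul_le_mul (abs_apply_le_euclNorm v k) (abs_apply_le_euclNorm v l) (abs_nonneg _) h.le

lemma abs_outerDivNorm_sub_le_of_le {v w : Fin d → ℝ} (hwv : euclNorm w ≤ euclNorm v)
    (k l : Fin d) :
    |outerDivNorm v k l - outerDivNorm w k l| ≤ 3 * euclNorm (v - w) := by
  have hδ : 0 ≤ euclNorm (v - w) := euclNorm_nonneg _
  have hab : |euclNorm v - euclNorm w| ≤ euclNorm (v - w) := abs_euclNorm_sub_euclNorm_le v w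
  rcases (euclNorm_nonneg w).eq_or_lt with hb | hb
  · have hwk : w k = 0 := abs_nonpos_iff.1 (hb ▸ abs_apply_le_euclNorm w k)
    rw [← hb, sub_zero, abs_of_nonneg (euclNorm_nonneg v)] at hab
    have hw0 : outerDivNorm w k l = 0 := by simp [outerDivNorm, hwk]
    rw [hw0, sub_zero]
    linarith [abs_outerDivNorm_le v k l]
  have ha : 0 < euclNorm v := hb.trans_le hwv
  have hnum : |v k * (v l - w l) + (v k - w k) * w l| ≤
      euclNorm v * euclNorm (v - w) + euclNorm (v - w) * euclNorm w := by
    refine (abs_add_le _ _).trans ?_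
    rw [abs_mul, abs_mul]
    gcongr
    exacts [abs_apply_le_euclNorm v k, abs_apply_le_euclNorm (v - w) l,
      abs_apply_le_euclNorm (v - w) k, abs_apply_le_euclNorm w l]
  have hden : |w k * w l * (euclNorm w - euclNorm v)| ≤
      euclNorm w * euclNorm w * euclNorm (v - w) := by
    rw [abs_mul, abs_mul, abs_sub_comm]
    gcongr
    exacts [abs_apply_le_euclNorm w k, abs_apply_le_euclNorm w l]
  have split : outerDivNorm v k l - outerDivNorm w k l =
      (v k * (v l - w l) + (v k - w k) * w l) / euclNorm v +
        w k * w l * (euclNorm w - euclNorm v) / (euclNorm v * euclNorm w) := by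
    simp only [outerDivNorm]; field_simp; ring
  have hba : euclNorm w / euclNorm v ≤ 1 := (div_le_one ha).2 hwv
  calc |outerDivNorm v k l - outerDivNorm w k l|
      ≤ |v k * (v l - w l) + (v k - w k) * w l| / euclNorm v +
          |w k * w l * (euclNorm w - euclNorm v)| / (euclNorm v * euclNorm w) := by
        rw [split]
        refine (abs_add_le _ _).trans_eq ?_
        rw [abs_div, abs_div, abs_of_pos ha, abs_of_pos (mul_pos ha hb)]
    _ ≤ (euclNorm v * euclNorm (v - w) + euclNorm (v - w) * euclNorm w) / euclNorm v +
          euclNorm w * euclNorm w * euclNorm (v - w) / (euclNorm v * euclNorm w) := by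
        gcongr
    _ = (1 + 2 * (euclNorm w / euclNorm v)) * euclNorm (v - w) := by
        field_simp; ring
    _ ≤ 3 * euclNorm (v - w) := by nlinarith

lemma abs_outerDivNorm_sub_le (v w : Fin d → ℝ) (k l : Fin d) :
    |outerDivNorm v k l - outerDivNorm w k l| ≤ 3 * euclNorm (v - w) := by
  rcases le_total (euclNorm w) (euclNorm v) with h | h
  · exact abs_outerDivNorm_sub_le_of_le h k l
  · rw [abs_sub_comm, euclNorm_sub_comm]
    exact abs_outerDivNorm_sub_le_of_le h k l

lemma sum_mul_outerDivNorm_le (M : Matrix (Fin d) (Fin d) ℝ) (v : Fin d → ℝ) :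
    ∑ k, ∑ l, M k l * outerDivNorm v k l ≤ ‖M‖ * euclNorm v := by
  rcases (euclNorm_nonneg v).eq_or_lt with h | h
  · simp [outerDivNorm, ← h]
  have hquad : ∑ k, ∑ l, M k l * outerDivNorm v k l = v ⬝ᵥ (M *ᵥ v) / euclNorm v := by
    simp only [outerDivNorm, dotProduct, Matrix.mulVec, Finset.mul_sum, Finset.sum_div]
    exact Finset.sum_congr rfl fun k _ => Finset.sum_congr rfl fun l _ => by ring
  rw [hquad, div_le_iff₀ h]
  calc v ⬝ᵥ (M *ᵥ v) ≤ euclNorm v * euclNorm (M *ᵥ v) := dotProduct_le_euclNorm_mul _ _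
    _ ≤ euclNorm v * (‖M‖ * euclNorm v) := by gcongr; exact euclNorm_mulVec_le M v
    _ = ‖M‖ * euclNorm v * euclNorm v := by ring

abbrev UnitSphere (d : ℕ) := sphere (0 : EuclideanSpace ℝ (Fin d)) 1

instance : IsFiniteMeasure (sphereSurf d) := by unfold sphereSurf; infer_instance

instance : (sphereSurf d).IsOpenPosMeasure := by unfold sphereSurf; infer_instance

lemma euclNorm_mulVec_unitSphere_le (G : Matrix (Fin d) (Fin d) ℝ) (u : UnitSphere d) :
    euclNorm (G *ᵥ u) ≤ ‖G‖ := by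
  simpa [euclNorm_eq_norm, norm_eq_of_mem_sphere u] using euclNorm_mulVec_le G u

lemma continuous_euclNorm : Continuous (euclNorm (d := d)) := by
  unfold euclNorm; fun_prop

lemma continuous_mulVec_unitSphere (G : Matrix (Fin d) (Fin d) ℝ) :
    Continuous fun u : UnitSphere d => G *ᵥ u := by
  fun_prop

lemma integrable_euclNorm_mulVec (G : Matrix (Fin d) (Fin d) ℝ) :
    Integrable (fun u : UnitSphere d => euclNorm (G *ᵥ u)) (sphereSurf d) :=
  .of_bound (continuous_euclNorm.comp (continuous_mulVec_unitSphere G)).aestronglyMeasurable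
    ‖G‖ <| ae_of_all _ fun u => by
      simpa [abs_of_nonneg (euclNorm_nonneg _)] using euclNorm_mulVec_unitSphere_le G u

lemma integrable_outerDivNorm_mulVec (G : Matrix (Fin d) (Fin d) ℝ) (k l : Fin d) :
    Integrable (fun u : UnitSphere d => outerDivNorm (G *ᵥ u) k l) (sphereSurf d) := by
  have hG := continuous_mulVec_unitSphere G
  refine .of_bound ?_ ‖G‖ (ae_of_all _ fun u =>
    (abs_outerDivNorm_le _ k l).trans (euclNorm_mulVec_unitSphere_le G u))
  exact (((continuous_apply k).comp hG).measurable.mul ((continuous_apply l).comp hG).measurable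
    |>.div (continuous_euclNorm.comp hG).measurable).aestronglyMeasurable

lemma abs_integral_sub_le {f g : UnitSphere d → ℝ} (hf : Integrable f (sphereSurf d))
    (hg : Integrable g (sphereSurf d)) {C : ℝ} (h : ∀ u, |f u - g u| ≤ C) :
    |∫ u, f u ∂sphereSurf d - ∫ u, g u ∂sphereSurf d| ≤ C * (sphereSurf d).real Set.univ := by
  rw [← integral_sub hf hg, ← Real.norm_eq_abs]
  exact norm_integral_le_of_norm_le_const (ae_of_all (sphereSurf d) fun u =>
    (Real.norm_eq_abs (f u - g u)).trans_le (h u))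

def desNumerator (d : ℕ) (G : Matrix (Fin d) (Fin d) ℝ) : Matrix (Fin d) (Fin d) ℝ :=
  fun k l => ∫ u : UnitSphere d, outerDivNorm (G *ᵥ u) k l ∂sphereSurf d

def desDenominator (d : ℕ) (G : Matrix (Fin d) (Fin d) ℝ) : ℝ :=
  ∫ u : UnitSphere d, euclNorm (G *ᵥ u) ∂sphereSurf d

/-- The isotropic correction `1 / d` in `DES` is computed in `ℕ`, so it vanishes once `2 ≤ d`. -/
lemma DES_eq_inv_smul (hd : 2 ≤ d) (G : Matrix (Fin d) (Fin d) ℝ) :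
    DES d G = (desDenominator d G)⁻¹ • desNumerator d G := by
  ext k l
  have : 1 / d = 0 := Nat.div_eq_of_lt (by omega)
  simp [DES, desNumerator, desDenominator, outerDivNorm, this, div_eq_inv_mul]

lemma abs_desDenominator_sub_le (G₁ G₂ : Matrix (Fin d) (Fin d) ℝ) :
    |desDenominator d G₁ - desDenominator d G₂| ≤ (sphereSurf d).real Set.univ * ‖G₁ - G₂‖ := by
  rw [mul_comm]
  refine abs_integral_sub_le (integrable_euclNorm_mulVec G₁) (integrable_euclNorm_mulVec G₂)
    fun u => ?_
  calc _ ≤ euclNorm (G₁ *ᵥ u - G₂ *ᵥ u) := abs_euclNorm_sub_euclNorm_le _ _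
    _ ≤ ‖G₁ - G₂‖ := by rw [← Matrix.sub_mulVec]; exact euclNorm_mulVec_unitSphere_le _ u

lemma abs_desNumerator_apply_sub_le (G₁ G₂ : Matrix (Fin d) (Fin d) ℝ) (k l : Fin d) :
    |desNumerator d G₁ k l - desNumerator d G₂ k l| ≤
      3 * (sphereSurf d).real Set.univ * ‖G₁ - G₂‖ := by
  rw [mul_right_comm]
  refine abs_integral_sub_le (integrable_outerDivNorm_mulVec G₁ k l)
    (integrable_outerDivNorm_mulVec G₂ k l) fun u => ?_
  calc _ ≤ 3 * euclNorm (G₁ *ᵥ u - G₂ *ᵥ u) := abs_outerDivNorm_sub_le _ _ k l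
    _ ≤ 3 * ‖G₁ - G₂‖ := by
      rw [← Matrix.sub_mulVec]; gcongr; exact euclNorm_mulVec_unitSphere_le _ u

lemma norm_desNumerator_sub_le (G₁ G₂ : Matrix (Fin d) (Fin d) ℝ) :
    ‖desNumerator d G₁ - desNumerator d G₂‖ ≤
      d * (3 * (sphereSurf d).real Set.univ * ‖G₁ - G₂‖) :=
  norm_le_mul_of_abs_apply_le (by positivity) (abs_desNumerator_apply_sub_le G₁ G₂)

lemma norm_desNumerator_le (G : Matrix (Fin d) (Fin d) ℝ) :
    ‖desNumerator d G‖ ≤ desDenominator d G := by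
  -- `‖A‖²` is `A` paired with its own defining integral; bound the pairing pointwise
  have hpair : ‖desNumerator d G‖ ^ 2 = ∫ u : UnitSphere d,
      ∑ k, ∑ l, desNumerator d G k l * outerDivNorm (G *ᵥ u) k l ∂sphereSurf d := by
    have hint : ∀ k l, Integrable (fun u : UnitSphere d =>
        desNumerator d G k l * outerDivNorm (G *ᵥ u) k l) (sphereSurf d) :=
      fun k l => (integrable_outerDivNorm_mulVec G k l).const_mul _
    rw [norm_sq_eq_sum,
      integral_finsetSum _ fun k _ => integrable_finsetSum _ fun l _ => hint k l]
    refine Finset.sum_congr rfl fun k _ => ?_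
    rw [integral_finsetSum _ fun l _ => hint k l]
    refine Finset.sum_congr rfl fun l _ => ?_
    rw [integral_const_mul, sq]
    rfl
  have hle : ‖desNumerator d G‖ ^ 2 ≤ ‖desNumerator d G‖ * desDenominator d G := by
    rw [hpair, desDenominator, ← integral_const_mul]
    refine integral_mono ?_ ((integrable_euclNorm_mulVec G).const_mul _) fun u =>
      sum_mul_outerDivNorm_le _ _
    exact integrable_finsetSum _ fun k _ => integrable_finsetSum _ fun l _ =>
      (integrable_outerDivNorm_mulVec G k l).const_mul _
  rcases (norm_nonneg (desNumerator d G)).eq_or_lt with h | h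
  · rw [← h]; exact integral_nonneg fun u => euclNorm_nonneg _
  · nlinarith

lemma desDenominator_smul {t : ℝ} (ht : 0 ≤ t) (G : Matrix (Fin d) (Fin d) ℝ) :
    desDenominator d (t • G) = t * desDenominator d G := by
  simp only [desDenominator, Matrix.smul_mulVec, euclNorm_smul, abs_of_nonneg ht,
    integral_const_mul]

lemma desDenominator_pos {G : Matrix (Fin d) (Fin d) ℝ} (hG : G ≠ 0) : 0 < desDenominator d G := by
  obtain ⟨k, j, hkj⟩ : ∃ k j, G k j ≠ 0 := by
    by_contra! h; exact hG (Matrix.ext h)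
  let e : UnitSphere d := ⟨EuclideanSpace.single j 1, by simp⟩
  have he : euclNorm (G *ᵥ e) ≠ 0 := by
    refine (lt_of_lt_of_le (abs_pos.2 ?_) (abs_apply_le_euclNorm _ k)).ne'
    simpa [e, Matrix.mulVec_single_one] using hkj
  exact (continuous_euclNorm.comp (continuous_mulVec_unitSphere G))
    |>.integral_pos_of_hasCompactSupport_nonneg_nonzero (.of_compactSpace _)
      (fun u => euclNorm_nonneg _) he

lemma exists_pos_mul_norm_le_desDenominator (d : ℕ) :
    ∃ c > 0, ∀ G : Matrix (Fin d) (Fin d) ℝ, c * ‖G‖ ≤ desDenominator d G := by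
  have hcont : Continuous (desDenominator d) :=
    LipschitzWith.continuous <| .of_dist_le' fun G₁ G₂ => by
      simpa [Real.dist_eq, dist_eq_norm] using abs_desDenominator_sub_le G₁ G₂
  exact exists_pos_mul_norm_le_of_continuous_of_homogeneous hcont
    (fun t ht G => desDenominator_smul ht G) fun G hG => desDenominator_pos hG

def truncatedDES (d : ℕ) (β : ℝ) (G : Matrix (Fin d) (Fin d) ℝ) : Matrix (Fin d) (Fin d) ℝ :=
  (max (desDenominator d G) β)⁻¹ • desNumerator d G

variable {β : ℝ}

lemma truncatedDES_eq_DES (hd : 2 ≤ d) {G : Matrix (Fin d) (Fin d) ℝ}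
    (hG : β ≤ desDenominator d G) : truncatedDES d β G = DES d G := by
  rw [truncatedDES, max_eq_left hG, DES_eq_inv_smul hd]

lemma norm_truncatedDES_le (hβ : 0 < β) (G : Matrix (Fin d) (Fin d) ℝ) :
    ‖truncatedDES d β G‖ ≤ 1 := by
  have hmax : 0 < max (desDenominator d G) β := hβ.trans_le (le_max_right _ _)
  rw [truncatedDES, norm_smul, norm_inv, Real.norm_of_nonneg hmax.le, inv_mul_le_one₀ hmax]
  exact (norm_desNumerator_le G).trans (le_max_left _ _)

lemma norm_truncatedDES_sub_le (hβ : 0 < β) (G₁ G₂ : Matrix (Fin d) (Fin d) ℝ) :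
    ‖truncatedDES d β G₁ - truncatedDES d β G₂‖ ≤
      (3 * d + 1) * (sphereSurf d).real Set.univ / β * ‖G₁ - G₂‖ := by
  calc ‖truncatedDES d β G₁ - truncatedDES d β G₂‖
      ≤ (‖desNumerator d G₁ - desNumerator d G₂‖ +
          |max (desDenominator d G₁) β - max (desDenominator d G₂) β|) / β :=
        norm_inv_smul_sub_inv_smul_le hβ (le_max_right _ _) (le_max_right _ _)
          ((norm_desNumerator_le G₂).trans (le_max_left _ _))
    _ ≤ (d * (3 * (sphereSurf d).real Set.univ * ‖G₁ - G₂‖) +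
          (sphereSurf d).real Set.univ * ‖G₁ - G₂‖) / β := by
        gcongr
        · exact norm_desNumerator_sub_le G₁ G₂
        · exact (abs_max_sub_max_le_abs _ _ _).trans (abs_desDenominator_sub_le G₁ G₂)
    _ = (3 * d + 1) * (sphereSurf d).real Set.univ / β * ‖G₁ - G₂‖ := by ring

end

end DoiEdwards

open DoiEdwards in
/-- **Truncation of the Doi–Edwards orientation map (Lemma 4.3).** For every `γ̃ > 0`
there are `L ≥ 0` and `𝒮̃ : M_d(ℝ) → M_d(ℝ)` with: (i) `𝒮̃ = 𝒮` on `{|G| ≥ γ̃}`;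
(ii) `|𝒮̃(G)| ≤ 1 + 1/√d` everywhere; (iii) `𝒮̃` is globally Lipschitz with constant `L`
(Frobenius norms throughout). -/
theorem stmt8 (d : ℕ) (hd : 2 ≤ d) (γ : ℝ) (hγ : 0 < γ) :
    ∃ L : ℝ, 0 ≤ L ∧ ∃ St : Matrix (Fin d) (Fin d) ℝ → Matrix (Fin d) (Fin d) ℝ,
      (∀ G, γ ≤ frobNorm G → St G = DES d G) ∧
      (∀ G, frobNorm (St G) ≤ 1 + 1 / Real.sqrt d) ∧
      (∀ G₁ G₂, frobNorm (St G₁ - St G₂) ≤ L * frobNorm (G₁ - G₂)) := by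
  obtain ⟨c, hc, hcN⟩ := exists_pos_mul_norm_le_desDenominator d
  have hβ : 0 < c * γ := mul_pos hc hγ
  refine ⟨(3 * d + 1) * (sphereSurf d).real Set.univ / (c * γ), by positivity,
    truncatedDES d (c * γ), fun G hG => ?_, fun G => ?_, fun G₁ G₂ => ?_⟩
  · rw [frobNorm_eq_norm] at hG
    exact truncatedDES_eq_DES hd ((mul_le_mul_of_nonneg_left hG hc.le).trans (hcN G))
  · rw [frobNorm_eq_norm]
    exact (norm_truncatedDES_le hβ G).trans (le_add_of_nonneg_right (by positivity))
  · rw [frobNorm_eq_norm, frobNorm_eq_norm]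
    exact norm_truncatedDES_sub_le hβ G₁ G₂
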